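/- arXiv:2208.11638 — 4 statements merged into one kernel-verified Lean document; each statement's English description precedes it below -/
import Mathlib

section
/- Let w : ℝ → ℝ be twice differentiable and satisfy the Painlevé II equation w''(ξ) = ξ·w(ξ) + 2·w(ξ)³. Fix t < 0 and a nonzero constant α, and define for (y, x) ∈ ℝ²: ξ(x,y) = x·(−3t)^{−1/3} + y²·(−3t)^{−4/3}, p(y,x) = α·(−3t)^{−1/3}·exp(−xy/(3t) + 2y³/(27t²))·w(ξ(x,y)), and r(y,x) = −α^{−1}·(−3t)^{−1/3}·exp(xy/(3t) − 2y³/(27t²))·w(ξ(x,y)). Then p and r satisfy the scalar coupled nonlinear Schrödinger system with complex time: ∂_y p = ∂_x² p + 2 p² r and ∂_y r = −∂_x² r − 2 r² p. -/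
/-!
With `c = (-3t)^{-1/3}` we have `c³ = -1/(3t)`, so `ξ = c x + c⁴ y²` and the exponent of `p` is the
phase `φ = c³ x y + (2/3) c⁶ y³`. For `u = A e^{σφ} w(ξ)` with `σ = ±1`, the terms of `∂_y u` and
`∂_x² u` that are linear in `w, w'` cancel once `w''` is replaced through Painlevé II, leaving
`∂_y u - σ ∂_x² u = -2σ c² A e^{σφ} w³`. Since `p · r = -c² w²`, this is exactly the cubic term of
the coupled system.
-/

open Real

lemma hasDerivAt_const_mul_exp_mul_comp {u g q : ℝ → ℝ} {A G Q z : ℝ}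
    (hu : DifferentiableAt ℝ u (q z)) (hg : HasDerivAt g G z) (hq : HasDerivAt q Q z) :
    HasDerivAt (fun s => A * exp (g s) * u (q s))
      (A * exp (g z) * (G * u (q z) + Q * deriv u (q z))) z := by
  have hcomp : HasDerivAt (fun s => u (q s)) (deriv u (q z) * Q) z := hu.hasDerivAt.comp z hq
  exact ((hg.exp.const_mul A).mul hcomp).congr_deriv (by ring)

lemma deriv_deriv_const_mul_exp_mul_comp_affine {w g : ℝ → ℝ} (hw1 : Differentiable ℝ w)
    (hw2 : Differentiable ℝ (deriv w)) {G : ℝ} (hg : ∀ z, HasDerivAt g G z) (A c e x : ℝ) :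
    deriv (deriv (fun s => A * exp (g s) * w (c * s + e))) x
      = A * exp (g x) * (G ^ 2 * w (c * x + e) + 2 * G * c * deriv w (c * x + e)
          + c ^ 2 * deriv (deriv w) (c * x + e)) := by
  have hq (z : ℝ) : HasDerivAt (fun s => c * s + e) c z := by
    simpa using ((hasDerivAt_id z).const_mul c).add_const e
  set u : ℝ → ℝ := fun s => G * w s + c * deriv w s
  have hu (s : ℝ) : HasDerivAt u (G * deriv w s + c * deriv (deriv w) s) s :=
    ((hw1 s).hasDerivAt.const_mul G).add ((hw2 s).hasDerivAt.const_mul c)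
  have hfirst : deriv (fun s => A * exp (g s) * w (c * s + e))
      = fun z => A * exp (g z) * u (c * z + e) :=
    funext fun z => (hasDerivAt_const_mul_exp_mul_comp (hw1 _) (hg z) (hq z)).deriv
  rw [hfirst, (hasDerivAt_const_mul_exp_mul_comp (hu _).differentiableAt (hg x) (hq x)).deriv,
    (hu _).deriv]
  ring

lemma rpow_neg_one_div_three_pow_three {a : ℝ} (ha : 0 ≤ a) :
    (a ^ (-(1 / 3 : ℝ))) ^ 3 = a⁻¹ := by
  rw [← rpow_natCast, ← rpow_mul ha]
  norm_num [rpow_neg_one]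

lemma rpow_neg_four_div_three {a : ℝ} (ha : 0 ≤ a) :
    a ^ (-(4 / 3 : ℝ)) = (a ^ (-(1 / 3 : ℝ))) ^ 4 := by
  rw [← rpow_natCast, ← rpow_mul ha]
  norm_num

noncomputable section

namespace SelfSimilarNLS

def phase (c y x : ℝ) : ℝ := c ^ 3 * y * x + 2 / 3 * c ^ 6 * y ^ 3

def profile (w : ℝ → ℝ) (c A σ y x : ℝ) : ℝ :=
  A * exp (σ * phase c y x) * w (c * x + c ^ 4 * y ^ 2)

variable {w : ℝ → ℝ}

lemma deriv_profile_fst (hw1 : Differentiable ℝ w) (c A σ y x : ℝ) :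
    deriv (fun y' => profile w c A σ y' x) y
      = A * exp (σ * phase c y x) * (σ * (c ^ 3 * x + 2 * c ^ 6 * y ^ 2) * w (c * x + c ^ 4 * y ^ 2)
          + 2 * c ^ 4 * y * deriv w (c * x + c ^ 4 * y ^ 2)) := by
  have hphase : HasDerivAt (fun y' => σ * phase c y' x) (σ * (c ^ 3 * x + 2 * c ^ 6 * y ^ 2)) y := by
    refine (((((hasDerivAt_id' y).const_mul (c ^ 3)).mul_const x).add
      ((hasDerivAt_pow 3 y).const_mul (2 / 3 * c ^ 6))).const_mul σ).congr_deriv ?_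
    push_cast; ring
  have harg : HasDerivAt (fun y' => c * x + c ^ 4 * y' ^ 2) (2 * c ^ 4 * y) y := by
    refine (((hasDerivAt_pow 2 y).const_mul (c ^ 4)).const_add (c * x)).congr_deriv ?_
    push_cast; ring
  exact (hasDerivAt_const_mul_exp_mul_comp (hw1 _) hphase harg).deriv

lemma deriv_deriv_profile_snd (hw1 : Differentiable ℝ w) (hw2 : Differentiable ℝ (deriv w))
    (c A σ y x : ℝ) :
    deriv (deriv (fun x' => profile w c A σ y x')) x
      = A * exp (σ * phase c y x) * ((σ * c ^ 3 * y) ^ 2 * w (c * x + c ^ 4 * y ^ 2)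
          + 2 * (σ * c ^ 3 * y) * c * deriv w (c * x + c ^ 4 * y ^ 2)
          + c ^ 2 * deriv (deriv w) (c * x + c ^ 4 * y ^ 2)) := by
  have hphase (z : ℝ) : HasDerivAt (fun x' => σ * phase c y x') (σ * c ^ 3 * y) z := by
    refine ((((hasDerivAt_id' z).const_mul (c ^ 3 * y)).add_const
      (2 / 3 * c ^ 6 * y ^ 3)).const_mul σ).congr_deriv ?_
    ring
  exact deriv_deriv_const_mul_exp_mul_comp_affine hw1 hw2 hphase A c (c ^ 4 * y ^ 2) x

theorem profile_coupledNLS (hw1 : Differentiable ℝ w) (hw2 : Differentiable ℝ (deriv w))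
    (hPII : ∀ s : ℝ, deriv (deriv w) s = s * w s + 2 * (w s) ^ 3)
    {c A B : ℝ} (hAB : A * B = -c ^ 2) (y x : ℝ) :
    deriv (fun y' => profile w c A 1 y' x) y
        = deriv (deriv (fun x' => profile w c A 1 y x')) x
          + 2 * (profile w c A 1 y x) ^ 2 * profile w c B (-1) y x
      ∧ deriv (fun y' => profile w c B (-1) y' x) y
        = -deriv (deriv (fun x' => profile w c B (-1) y x')) x
          - 2 * (profile w c B (-1) y x) ^ 2 * profile w c A 1 y x := by
  have hexp : exp (1 * phase c y x) * exp (-1 * phase c y x) = 1 := by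
    rw [← exp_add, neg_one_mul, one_mul, add_neg_cancel, exp_zero]
  rw [deriv_profile_fst hw1, deriv_profile_fst hw1, deriv_deriv_profile_snd hw1 hw2,
    deriv_deriv_profile_snd hw1 hw2, hPII]
  simp only [profile]
  set E := exp (1 * phase c y x)
  set E' := exp (-1 * phase c y x)
  set W := w (c * x + c ^ 4 * y ^ 2)
  constructor
  · linear_combination (-2 * A * E ^ 2 * E' * W ^ 3) * hAB + 2 * A * c ^ 2 * E * W ^ 3 * hexp
  · linear_combination (2 * B * E' ^ 2 * E * W ^ 3) * hAB - 2 * B * c ^ 2 * E' * W ^ 3 * hexp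

end SelfSimilarNLS

end

open SelfSimilarNLS in
/-- Self-similar Painlevé II solutions of the scalar coupled NLS system with complex time. -/
theorem stmt_2 (w : ℝ → ℝ)
    (hw1 : Differentiable ℝ w) (hw2 : Differentiable ℝ (deriv w))
    (hPII : ∀ s : ℝ, deriv (deriv w) s = s * w s + 2 * (w s) ^ 3)
    (t : ℝ) (ht : t < 0) (α : ℝ) (hα : α ≠ 0)
    (ξ : ℝ → ℝ → ℝ)
    (hξ : ∀ x y : ℝ, ξ x y = x * (-3 * t) ^ (-(1 / 3 : ℝ)) + y ^ 2 * (-3 * t) ^ (-(4 / 3 : ℝ)))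
    (p r : ℝ → ℝ → ℝ)
    (hp : ∀ y x : ℝ, p y x
        = α * (-3 * t) ^ (-(1 / 3 : ℝ)) * Real.exp (-(x * y) / (3 * t) + 2 * y ^ 3 / (27 * t ^ 2))
            * w (ξ x y))
    (hr : ∀ y x : ℝ, r y x
        = -α⁻¹ * (-3 * t) ^ (-(1 / 3 : ℝ)) * Real.exp ((x * y) / (3 * t) - 2 * y ^ 3 / (27 * t ^ 2))
            * w (ξ x y)) :
    ∀ y x : ℝ,
      deriv (fun y' => p y' x) y
          = deriv (deriv (fun x' => p y x')) x + 2 * (p y x) ^ 2 * r y x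
      ∧ deriv (fun y' => r y' x) y
          = -(deriv (deriv (fun x' => r y x')) x) - 2 * (r y x) ^ 2 * p y x := by
  have h3t : 0 ≤ -3 * t := by linarith
  set c := (-3 * t) ^ (-(1 / 3 : ℝ))
  have hc3 : c ^ 3 = -(3 * t)⁻¹ := by
    rw [rpow_neg_one_div_three_pow_three h3t, ← inv_neg, neg_mul]
  have hphase (y x : ℝ) : -(x * y) / (3 * t) + 2 * y ^ 3 / (27 * t ^ 2) = 1 * phase c y x := by
    rw [phase, show c ^ 6 = (c ^ 3) ^ 2 by ring, hc3]
    field_simp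
    ring
  have hξ' (x y : ℝ) : ξ x y = c * x + c ^ 4 * y ^ 2 := by
    rw [hξ, rpow_neg_four_div_three h3t]
    ring
  obtain rfl : p = profile w c (α * c) 1 := by
    ext y x
    rw [hp, hphase, hξ', profile]
  obtain rfl : r = profile w c (-α⁻¹ * c) (-1) := by
    ext y x
    rw [hr, show x * y / (3 * t) - 2 * y ^ 3 / (27 * t ^ 2) = -1 * phase c y x by
      linear_combination -hphase y x, hξ', profile]
  exact profile_coupledNLS hw1 hw2 hPII (by field_simp)
end

section
/- Let w : ℝ → ℝ be twice differentiable with w''(ξ) = ξ·w(ξ) + 2·w(ξ)³, and let α ≠ 0. Define, for t < 0 and (y,x) ∈ ℝ²: ξ(x,y,t) = x·(−3t)^{−1/3} + y²·(−3t)^{−4/3}, p(t,y,x) = α·(−3t)^{−1/3}·exp(−xy/(3t) + 2y³/(27t²))·w(ξ), and r(t,y,x) = −α^{−1}·(−3t)^{−1/3}·exp(xy/(3t) − 2y³/(27t²))·w(ξ). Then p and r satisfy the scalar coupled modified KdV system: ∂_t p = ∂_x³ p + 6 p r ∂_x p and ∂_t r = ∂_x³ r + 6 r p ∂_x r. -/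
/-!
Write `c = (-3t)^(-1/3)`, so that `c³ = 1/(-3t)` and `dc/dt = c⁴`. For fixed `y`, both `p` and `r`
are of the form `u = A c exp(y c³ x + 2/3 y³ c⁶) w(c x + y² c⁴)`, with `(A, y)` equal to `(α, y)`
and `(-α⁻¹, -y)` respectively. For every such `u`, the Painlevé II equation makes
`c⁴ ∂_c u = ∂ₓ³ u - 6 c² w² ∂ₓ u` a polynomial identity in `w, w'` at `c x + y² c⁴`, and
`p r = -c² w²` because the exponentials cancel.
-/

open Real Filter Topology

noncomputable def similarityScale (t : ℝ) : ℝ := (-3 * t) ^ (-(1 / 3 : ℝ))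

noncomputable def selfSimilarProfile (w : ℝ → ℝ) (A y c x : ℝ) : ℝ :=
  A * c * exp (y * c ^ 3 * x + 2 / 3 * y ^ 3 * c ^ 6) * w (c * x + y ^ 2 * c ^ 4)

lemma similarityScale_pow_three {t : ℝ} (ht : t ≤ 0) : similarityScale t ^ 3 = (-3 * t)⁻¹ := by
  rw [similarityScale, ← rpow_natCast, ← rpow_mul (by linarith)]
  norm_num [rpow_neg_one]

lemma rpow_neg_four_thirds_eq_similarityScale_pow {t : ℝ} (ht : t ≤ 0) :
    (-3 * t) ^ (-(4 / 3 : ℝ)) = similarityScale t ^ 4 := by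
  rw [similarityScale, ← rpow_natCast, ← rpow_mul (by linarith)]
  norm_num

lemma hasDerivAt_similarityScale {t : ℝ} (ht : t < 0) :
    HasDerivAt similarityScale (similarityScale t ^ 4) t := by
  have h := (hasDerivAt_rpow_const (p := -(1 / 3 : ℝ)) (Or.inl (by linarith : -3 * t ≠ 0))).comp t
    ((hasDerivAt_id' t).const_mul (-3))
  refine h.congr_deriv ?_
  rw [show -(1 / 3 : ℝ) - 1 = -(4 / 3) by norm_num, rpow_neg_four_thirds_eq_similarityScale_pow ht.le]
  ring

lemma eq_selfSimilarProfile_similarityScale (w : ℝ → ℝ) (A y x : ℝ) {t : ℝ} (ht : t < 0) :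
    A * (-3 * t) ^ (-(1 / 3 : ℝ)) * exp (-(x * y) / (3 * t) + 2 * y ^ 3 / (27 * t ^ 2))
        * w (x * (-3 * t) ^ (-(1 / 3 : ℝ)) + y ^ 2 * (-3 * t) ^ (-(4 / 3 : ℝ)))
      = selfSimilarProfile w A y (similarityScale t) x := by
  have hc : (-3 * t) ^ (-(1 / 3 : ℝ)) = similarityScale t := rfl
  have hexp : -(x * y) / (3 * t) + 2 * y ^ 3 / (27 * t ^ 2)
      = y * similarityScale t ^ 3 * x + 2 / 3 * y ^ 3 * similarityScale t ^ 6 := by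
    rw [show similarityScale t ^ 6 = (similarityScale t ^ 3) ^ 2 by ring,
      similarityScale_pow_three ht.le]
    field_simp
    ring
  rw [rpow_neg_four_thirds_eq_similarityScale_pow ht.le, hc, hexp, selfSimilarProfile, mul_comm x]

lemma selfSimilarProfile_mul_neg (w : ℝ → ℝ) (A B y c x : ℝ) :
    selfSimilarProfile w A y c x * selfSimilarProfile w B (-y) c x
      = A * B * (c * w (c * x + y ^ 2 * c ^ 4)) ^ 2 := by
  have hexp : exp (y * c ^ 3 * x + 2 / 3 * y ^ 3 * c ^ 6)
      * exp (-y * c ^ 3 * x + 2 / 3 * (-y) ^ 3 * c ^ 6) = 1 := by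
    rw [← exp_add, ← exp_zero]
    ring_nf
  rw [selfSimilarProfile, selfSimilarProfile, neg_sq]
  linear_combination A * B * (c * w (c * x + y ^ 2 * c ^ 4)) ^ 2 * hexp

lemma deriv_const_mul_exp_mul_comp_affine {f f' : ℝ → ℝ} (hf : ∀ s, HasDerivAt f (f' s) s)
    (A b k c d : ℝ) :
    deriv (fun x => A * exp (b * x + k) * f (c * x + d))
      = fun x => A * exp (b * x + k) * (b * f (c * x + d) + c * f' (c * x + d)) := by
  funext x
  have he := (((hasDerivAt_id' x).const_mul b).add_const k).exp.const_mul A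
  have hf' := (hf (c * x + d)).comp x (((hasDerivAt_id' x).const_mul c).add_const d)
  exact ((he.mul hf').congr_deriv (by rw [Function.comp_apply]; ring)).deriv

lemma deriv_deriv_deriv_const_mul_exp_mul_comp_affine {f f₁ f₂ f₃ : ℝ → ℝ}
    (h₀ : ∀ s, HasDerivAt f (f₁ s) s) (h₁ : ∀ s, HasDerivAt f₁ (f₂ s) s)
    (h₂ : ∀ s, HasDerivAt f₂ (f₃ s) s) (A b k c d : ℝ) :
    deriv (deriv (deriv fun x => A * exp (b * x + k) * f (c * x + d)))
      = fun x => A * exp (b * x + k) * (b ^ 3 * f (c * x + d) + 3 * b ^ 2 * c * f₁ (c * x + d)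
          + 3 * b * c ^ 2 * f₂ (c * x + d) + c ^ 3 * f₃ (c * x + d)) := by
  have step : ∀ {g g' g'' : ℝ → ℝ}, (∀ s, HasDerivAt g (g' s) s) →
      (∀ s, HasDerivAt g' (g'' s) s) →
      ∀ s, HasDerivAt (fun s => b * g s + c * g' s) (b * g' s + c * g'' s) s :=
    fun hg hg' s => ((hg s).const_mul b).add ((hg' s).const_mul c)
  rw [deriv_const_mul_exp_mul_comp_affine h₀, deriv_const_mul_exp_mul_comp_affine (step h₀ h₁),
    deriv_const_mul_exp_mul_comp_affine (step (step h₀ h₁) (step h₁ h₂))]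
  funext x
  ring

lemma hasDerivAt_painleveII_rhs {w w' : ℝ → ℝ} (hw : ∀ s, HasDerivAt w (w' s) s) (s : ℝ) :
    HasDerivAt (fun s => s * w s + 2 * w s ^ 3) (w s + s * w' s + 6 * w s ^ 2 * w' s) s :=
  (((hasDerivAt_id' s).mul (hw s)).add (((hw s).pow 3).const_mul 2)).congr_deriv (by ring)

lemma hasDerivAt_selfSimilarProfile_scale {w w' : ℝ → ℝ} (hw : ∀ s, HasDerivAt w (w' s) s)
    (A y c x : ℝ) :
    HasDerivAt (fun c => selfSimilarProfile w A y c x)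
      (A * exp (y * c ^ 3 * x + 2 / 3 * y ^ 3 * c ^ 6)
        * ((1 + 3 * y * c ^ 3 * x + 4 * y ^ 3 * c ^ 6) * w (c * x + y ^ 2 * c ^ 4)
          + (x * c + 4 * y ^ 2 * c ^ 4) * w' (c * x + y ^ 2 * c ^ 4))) c := by
  have hE := ((((hasDerivAt_pow 3 c).const_mul y).mul_const x).fun_add
    ((hasDerivAt_pow 6 c).const_mul (2 / 3 * y ^ 3))).exp
  have hW := (hw (c * x + y ^ 2 * c ^ 4)).comp c
    (((hasDerivAt_id' c).mul_const x).fun_add ((hasDerivAt_pow 4 c).const_mul (y ^ 2)))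
  refine ((((hasDerivAt_id' c).const_mul A).fun_mul hE).fun_mul hW).congr_deriv ?_
  rw [Function.comp_apply]
  norm_num
  ring

lemma selfSimilarProfile_scaling {w w' : ℝ → ℝ} (hw : ∀ s, HasDerivAt w (w' s) s)
    (hPII : ∀ s, HasDerivAt w' (s * w s + 2 * w s ^ 3) s) (A y c x : ℝ) :
    c ^ 4 * deriv (fun c => selfSimilarProfile w A y c x) c
      = deriv (deriv (deriv (selfSimilarProfile w A y c))) x
        - 6 * (c * w (c * x + y ^ 2 * c ^ 4)) ^ 2 * deriv (selfSimilarProfile w A y c) x := by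
  have hx : selfSimilarProfile w A y c = fun x =>
      A * c * exp (y * c ^ 3 * x + 2 / 3 * y ^ 3 * c ^ 6) * w (c * x + y ^ 2 * c ^ 4) := rfl
  rw [(hasDerivAt_selfSimilarProfile_scale hw A y c x).deriv, hx,
    deriv_deriv_deriv_const_mul_exp_mul_comp_affine hw hPII (hasDerivAt_painleveII_rhs hw),
    deriv_const_mul_exp_mul_comp_affine hw]
  ring

lemma selfSimilarProfile_mKdV {w w' : ℝ → ℝ} (hw : ∀ s, HasDerivAt w (w' s) s)
    (hPII : ∀ s, HasDerivAt w' (s * w s + 2 * w s ^ 3) s) (A y : ℝ) {t : ℝ} (ht : t < 0)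
    (x : ℝ) :
    deriv (fun t => selfSimilarProfile w A y (similarityScale t) x) t
      = deriv (deriv (deriv (selfSimilarProfile w A y (similarityScale t)))) x
        - 6 * (similarityScale t * w (similarityScale t * x + y ^ 2 * similarityScale t ^ 4)) ^ 2
          * deriv (selfSimilarProfile w A y (similarityScale t)) x := by
  rw [← selfSimilarProfile_scaling hw hPII, (hasDerivAt_selfSimilarProfile_scale hw A y _ x).deriv,
    mul_comm]
  exact ((hasDerivAt_selfSimilarProfile_scale hw A y _ x).comp t (hasDerivAt_similarityScale ht)).deriv

/-- Self-similar Painlevé II solutions of the scalar coupled mKdV system. -/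
theorem stmt_3 (w : ℝ → ℝ)
    (hw1 : Differentiable ℝ w) (hw2 : Differentiable ℝ (deriv w))
    (hPII : ∀ s : ℝ, deriv (deriv w) s = s * w s + 2 * (w s) ^ 3)
    (α : ℝ) (hα : α ≠ 0)
    (ξ : ℝ → ℝ → ℝ → ℝ)
    (hξ : ∀ x y t : ℝ,
      ξ x y t = x * (-3 * t) ^ (-(1 / 3 : ℝ)) + y ^ 2 * (-3 * t) ^ (-(4 / 3 : ℝ)))
    (p r : ℝ → ℝ → ℝ → ℝ)
    (hp : ∀ t : ℝ, t < 0 → ∀ y x : ℝ, p t y x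
        = α * (-3 * t) ^ (-(1 / 3 : ℝ)) * Real.exp (-(x * y) / (3 * t) + 2 * y ^ 3 / (27 * t ^ 2))
            * w (ξ x y t))
    (hr : ∀ t : ℝ, t < 0 → ∀ y x : ℝ, r t y x
        = -α⁻¹ * (-3 * t) ^ (-(1 / 3 : ℝ)) * Real.exp ((x * y) / (3 * t) - 2 * y ^ 3 / (27 * t ^ 2))
            * w (ξ x y t)) :
    ∀ t : ℝ, t < 0 → ∀ y x : ℝ,
      deriv (fun t' => p t' y x) t
          = deriv (fun x1 => deriv (fun x2 => deriv (fun x3 => p t y x3) x2) x1) x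
            + 6 * p t y x * r t y x * deriv (fun x' => p t y x') x
      ∧ deriv (fun t' => r t' y x) t
          = deriv (fun x1 => deriv (fun x2 => deriv (fun x3 => r t y x3) x2) x1) x
            + 6 * r t y x * p t y x * deriv (fun x' => r t y x') x := by
  intro t ht y x
  have hw : ∀ s, HasDerivAt w (deriv w s) s := fun s => (hw1 s).hasDerivAt
  have hw' : ∀ s, HasDerivAt (deriv w) (s * w s + 2 * w s ^ 3) s :=
    fun s => hPII s ▸ (hw2 s).hasDerivAt
  have hp' : ∀ t', t' < 0 → ∀ x', p t' y x' = selfSimilarProfile w α y (similarityScale t') x' := by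
    intro t' ht' x'
    rw [hp t' ht' y x', hξ, eq_selfSimilarProfile_similarityScale w α y x' ht']
  have hr' : ∀ t', t' < 0 → ∀ x',
      r t' y x' = selfSimilarProfile w (-α⁻¹) (-y) (similarityScale t') x' := by
    intro t' ht' x'
    rw [hr t' ht' y x', hξ, ← eq_selfSimilarProfile_similarityScale w _ _ x' ht', neg_sq]
    ring_nf
  have hpt : deriv (fun t' => p t' y x) t
      = deriv (fun t' => selfSimilarProfile w α y (similarityScale t') x) t :=
    EventuallyEq.deriv_eq (eventually_of_mem (Iio_mem_nhds ht) fun t' ht' => hp' t' ht' x)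
  have hrt : deriv (fun t' => r t' y x) t
      = deriv (fun t' => selfSimilarProfile w (-α⁻¹) (-y) (similarityScale t') x) t :=
    EventuallyEq.deriv_eq (eventually_of_mem (Iio_mem_nhds ht) fun t' ht' => hr' t' ht' x)
  have hpr := selfSimilarProfile_mul_neg w α (-α⁻¹) y (similarityScale t) x
  rw [mul_neg, mul_inv_cancel₀ hα] at hpr
  rw [hpt, hrt]
  simp only [hp' t ht, hr' t ht]
  constructor
  · rw [selfSimilarProfile_mKdV hw hw' _ _ ht]
    linear_combination (-6 * deriv (selfSimilarProfile w α y (similarityScale t)) x) * hpr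
  · rw [selfSimilarProfile_mKdV hw hw' _ _ ht, neg_sq]
    linear_combination (-6 * deriv (selfSimilarProfile w (-α⁻¹) (-y) (similarityScale t)) x) * hpr
end

section
/- Let w : ℝ → ℝ satisfy w'' = ξ w + 2w³ and α ≠ 0. For t < 0 and (y,x) ∈ ℝ², set ξ = x·(−3t)^{−1/3} + y²·(−3t)^{−4/3}, p = α·(−3t)^{−1/3}·exp(−xy/(3t) + 2y³/(27t²))·w(ξ), r = −α^{−1}·(−3t)^{−1/3}·exp(xy/(3t) − 2y³/(27t²))·w(ξ). Then, with ∂_x denoting the x-derivative, p and r satisfy the scalar Tracy–Widom-type ODE system: 3t·∂_x²p + 2y·∂_x p + 6t·p²r + x·p = 0 and 3t·∂_x²r − 2y·∂_x r + 6t·r²p + x·r = 0. -/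
/-!
In the variable `x`, both `p` and `r` have the form `x ↦ A e^{a x + b} w(c x + d)` with
`c = (-3t)^{-1/3}`, `3 t a = -y` (resp. `y`) and `d = y² c⁴`, and the prefactors satisfy
`A_p A_r = -c²`. Differentiating twice and using `w'' = ξ w + 2 w³`, the `w'` terms cancel
because `3 t a = ∓y`, the `w³` terms cancel against `6 t p² r = -6 t A_p c² e^{a x + b} w³`,
and the `w` terms cancel because `3 t c³ = -1`. The equation for `r` is the one for `p`
with `y ↦ -y`.
-/

open Real

noncomputable section

def gaugedAffineComp (g : ℝ → ℝ) (A a b c d : ℝ) (x : ℝ) : ℝ :=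
  A * exp (a * x + b) * g (c * x + d)

section gaugedAffineComp

variable {g : ℝ → ℝ} {A a b c d : ℝ}

theorem hasDerivAt_gaugedAffineComp (hg : Differentiable ℝ g) (x : ℝ) :
    HasDerivAt (gaugedAffineComp g A a b c d)
      (gaugedAffineComp g (A * a) a b c d x + gaugedAffineComp (deriv g) (A * c) a b c d x) x := by
  have hlin : ∀ m n : ℝ, HasDerivAt (fun x : ℝ => m * x + n) m x := fun m n => by
    simpa using ((hasDerivAt_id x).const_mul m).add_const n
  have hexp := (hasDerivAt_exp _).comp x (hlin a b)
  have hcomp := (hg (c * x + d)).hasDerivAt.comp x (hlin c d)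
  refine ((hexp.const_mul A).mul hcomp).congr_deriv ?_
  simp only [gaugedAffineComp, Function.comp_apply]
  ring

theorem deriv_gaugedAffineComp (hg : Differentiable ℝ g) :
    deriv (gaugedAffineComp g A a b c d)
      = gaugedAffineComp g (A * a) a b c d + gaugedAffineComp (deriv g) (A * c) a b c d :=
  funext fun x => (hasDerivAt_gaugedAffineComp hg x).deriv

theorem deriv_deriv_gaugedAffineComp (hg : Differentiable ℝ g) (hg' : Differentiable ℝ (deriv g))
    (x : ℝ) :
    deriv (deriv (gaugedAffineComp g A a b c d)) x
      = gaugedAffineComp g (A * a ^ 2) a b c d x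
        + gaugedAffineComp (deriv g) (2 * A * a * c) a b c d x
        + gaugedAffineComp (deriv (deriv g)) (A * c ^ 2) a b c d x := by
  rw [deriv_gaugedAffineComp hg,
    ((hasDerivAt_gaugedAffineComp hg x).add (hasDerivAt_gaugedAffineComp hg' x)).deriv]
  simp only [gaugedAffineComp]
  ring

theorem gaugedAffineComp_mul_neg (B x : ℝ) :
    gaugedAffineComp g A a b c d x * gaugedAffineComp g B (-a) (-b) c d x
      = A * B * g (c * x + d) ^ 2 := by
  have hexp : exp (a * x + b) * exp (-a * x + -b) = 1 := by
    rw [← exp_add, show a * x + b + (-a * x + -b) = 0 by ring, exp_zero]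
  simp only [gaugedAffineComp]
  linear_combination A * B * g (c * x + d) ^ 2 * hexp

end gaugedAffineComp

theorem rpow_neg_one_third_pow {s : ℝ} (hs : 0 ≤ s) (n : ℕ) :
    (s ^ (-(1 / 3 : ℝ))) ^ n = s ^ (-(n / 3 : ℝ)) := by
  rw [← rpow_natCast, ← rpow_mul hs]
  ring_nf

theorem tracyWidom_gaugedAffineComp_of_painleveII {w : ℝ → ℝ}
    (hw1 : Differentiable ℝ w) (hw2 : Differentiable ℝ (deriv w))
    (hPII : ∀ s : ℝ, deriv (deriv w) s = s * w s + 2 * (w s) ^ 3)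
    {t y A B a b c d : ℝ} (hc : 3 * t * c ^ 3 = -1) (ha : 3 * t * a = -y) (hd : d = y ^ 2 * c ^ 4)
    (hAB : A * B = -c ^ 2) (x : ℝ) :
    3 * t * deriv (deriv (gaugedAffineComp w A a b c d)) x
      + 2 * y * deriv (gaugedAffineComp w A a b c d) x
      + 6 * t * (gaugedAffineComp w A a b c d x) ^ 2 * gaugedAffineComp w B (-a) (-b) c d x
      + x * gaugedAffineComp w A a b c d x = 0 := by
  have hprod : 6 * t * (gaugedAffineComp w A a b c d x) ^ 2 * gaugedAffineComp w B (-a) (-b) c d x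
      = -6 * t * c ^ 2 * gaugedAffineComp w A a b c d x * w (c * x + d) ^ 2 := by
    linear_combination 6 * t * gaugedAffineComp w A a b c d x
        * gaugedAffineComp_mul_neg (g := w) (A := A) (a := a) (b := b) (c := c) (d := d) B x
      + 6 * t * gaugedAffineComp w A a b c d x * w (c * x + d) ^ 2 * hAB
  rw [hprod, deriv_deriv_gaugedAffineComp hw1 hw2, deriv_gaugedAffineComp hw1]
  simp only [Pi.add_apply, gaugedAffineComp, hPII]
  obtain rfl : y = -(3 * t * a) := by linarith
  -- coefficient of `w`: `3tc²(d - 9t²a²c⁴) + x(1 + 3tc³) + 3ta²((3tc³)² - 1)`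
  linear_combination A * exp (a * x + b) * w (c * x + d)
    * (3 * t * c ^ 2 * hd + (x + 3 * t * a ^ 2 * (3 * t * c ^ 3 - 1)) * hc)

end

/-- Self-similar Painlevé II solutions of the scalar Tracy–Widom-type ODE system. -/
theorem stmt_5 (w : ℝ → ℝ)
    (hw1 : Differentiable ℝ w) (hw2 : Differentiable ℝ (deriv w))
    (hPII : ∀ s : ℝ, deriv (deriv w) s = s * w s + 2 * (w s) ^ 3)
    (α : ℝ) (hα : α ≠ 0)
    (ξ : ℝ → ℝ → ℝ → ℝ)
    (hξ : ∀ x y t : ℝ,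
      ξ x y t = x * (-3 * t) ^ (-(1 / 3 : ℝ)) + y ^ 2 * (-3 * t) ^ (-(4 / 3 : ℝ)))
    (p r : ℝ → ℝ → ℝ → ℝ)
    (hp : ∀ t : ℝ, t < 0 → ∀ y x : ℝ, p t y x
        = α * (-3 * t) ^ (-(1 / 3 : ℝ)) * Real.exp (-(x * y) / (3 * t) + 2 * y ^ 3 / (27 * t ^ 2))
            * w (ξ x y t))
    (hr : ∀ t : ℝ, t < 0 → ∀ y x : ℝ, r t y x
        = -α⁻¹ * (-3 * t) ^ (-(1 / 3 : ℝ)) * Real.exp ((x * y) / (3 * t) - 2 * y ^ 3 / (27 * t ^ 2))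
            * w (ξ x y t)) :
    ∀ t : ℝ, t < 0 → ∀ y x : ℝ,
      3 * t * deriv (deriv (fun x' => p t y x')) x + 2 * y * deriv (fun x' => p t y x') x
          + 6 * t * (p t y x) ^ 2 * r t y x + x * p t y x = 0
      ∧ 3 * t * deriv (deriv (fun x' => r t y x')) x - 2 * y * deriv (fun x' => r t y x') x
          + 6 * t * (r t y x) ^ 2 * p t y x + x * r t y x = 0 := by
  intro t ht y x
  have ht0 : t ≠ 0 := ht.ne
  set c := (-3 * t) ^ (-(1 / 3 : ℝ)) with hc
  have hc3 : 3 * t * c ^ 3 = -1 := by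
    rw [rpow_neg_one_third_pow (by linarith) 3]
    norm_num [rpow_neg_one]
    field_simp
  have hc4 : (-3 * t) ^ (-(4 / 3 : ℝ)) = c ^ 4 := by
    rw [rpow_neg_one_third_pow (by linarith) 4]
    norm_num
  have hpfun : (fun x' => p t y x')
      = gaugedAffineComp w (α * c) (-y / (3 * t)) (2 * y ^ 3 / (27 * t ^ 2)) c (y ^ 2 * c ^ 4) := by
    funext x'
    rw [hp t ht, hξ, hc4, ← hc, gaugedAffineComp]
    ring_nf
  have hrfun : (fun x' => r t y x') = gaugedAffineComp w (-α⁻¹ * c) (-(-y / (3 * t)))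
      (-(2 * y ^ 3 / (27 * t ^ 2))) c (y ^ 2 * c ^ 4) := by
    funext x'
    rw [hr t ht, hξ, hc4, ← hc, gaugedAffineComp]
    ring_nf
  have ha : 3 * t * (-y / (3 * t)) = -y := by field_simp
  have hAB : α * c * (-α⁻¹ * c) = -c ^ 2 := by field_simp
  have hpx := congrFun hpfun x
  have hrx := congrFun hrfun x
  refine ⟨?_, ?_⟩
  · rw [hpfun, hpx, hrx]
    exact tracyWidom_gaugedAffineComp_of_painleveII hw1 hw2 hPII hc3 ha rfl hAB x
  · rw [hrfun, hpx, hrx]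
    have h := tracyWidom_gaugedAffineComp_of_painleveII hw1 hw2 hPII (y := -y)
      (A := -α⁻¹ * c) (B := α * c) (a := -(-y / (3 * t))) (b := -(2 * y ^ 3 / (27 * t ^ 2)))
      (d := y ^ 2 * c ^ 4) hc3 (by linear_combination -ha) (by ring) (by linear_combination hAB) x
    simp only [neg_neg] at h
    linear_combination h
end

section
/- Let n ≥ 1 and let V be a constant real n×n matrix with V² = I. Let Yᵈ, Yᵒ : ℝ³ → Mat(n×n, ℝ) be smooth matrix-valued functions of (t, y, x) satisfying V·Yᵒ = −Yᵒ·V and V·Yᵈ = Yᵈ·V pointwise, together with the four equations: (i) ∂_x Yᵈ = −V·(Yᵒ)², (ii) ∂_y Yᵈ = Yᵒ·(∂_x Yᵒ) − (∂_x Yᵒ)·Yᵒ, (iii) ∂_y Yᵒ = V·(∂_x² Yᵒ + 2(Yᵒ)³), (iv) ∂_t Yᵒ = ∂_x³ Yᵒ + 3(∂_x Yᵒ)(Yᵒ)² + 3(Yᵒ)²(∂_x Yᵒ). Set U = (Yᵒ)². Then ∂_x³ U − 3V·∂_y² Yᵈ − 4∂_t U + 6[U, ∂_y Yᵈ] + 6∂_x(U²)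 = 0, where [A,B] = AB − BA. -/
open Matrix

/-- Entrywise partial derivative in the first (time) variable. -/
noncomputable def Dt {n : ℕ} (F : ℝ → ℝ → ℝ → Matrix (Fin n) (Fin n) ℝ) :
    ℝ → ℝ → ℝ → Matrix (Fin n) (Fin n) ℝ :=
  fun t y x => Matrix.of fun i j => deriv (fun u => F u y x i j) t

/-- Entrywise partial derivative in the second (space-like) variable. -/
noncomputable def Dy {n : ℕ} (F : ℝ → ℝ → ℝ → Matrix (Fin n) (Fin n) ℝ) :
    ℝ → ℝ → ℝ → Matrix (Fin n) (Fin n) ℝ :=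
  fun t y x => Matrix.of fun i j => deriv (fun u => F t u x i j) y

/-- Entrywise partial derivative in the third variable. -/
noncomputable def Dx {n : ℕ} (F : ℝ → ℝ → ℝ → Matrix (Fin n) (Fin n) ℝ) :
    ℝ → ℝ → ℝ → Matrix (Fin n) (Fin n) ℝ :=
  fun t y x => Matrix.of fun i j => deriv (fun u => F t y u i j) x

noncomputable section KPaux

abbrev E3 : Type := ℝ × ℝ × ℝ

/-- directional partial derivative -/
noncomputable def pd (w : E3) (f : E3 → ℝ) : E3 → ℝ := fun v => fderiv ℝ f v w

lemma pd_contDiff {f : E3 → ℝ} (hf : ContDiff ℝ (⊤ : ℕ∞) f) (w : E3) : ContDiff ℝ (⊤ : ℕ∞) (pd w f) :=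
  (hf.fderiv_right (le_refl _)).clm_apply contDiff_const

lemma deriv_comp_curve {f : E3 → ℝ} (hf : ContDiff ℝ (⊤ : ℕ∞) f) {c : ℝ → E3} {w : E3} {s : ℝ}
    (hc : HasDerivAt c w s) : deriv (fun u => f (c u)) s = fderiv ℝ f (c s) w := by
  have h1 : HasFDerivAt f (fderiv ℝ f (c s)) (c s) :=
    (hf.differentiable (by simp) (c s)).hasFDerivAt
  exact (h1.comp_hasDerivAt s hc).deriv

lemma pd_comm {f : E3 → ℝ} (hf : ContDiff ℝ (⊤ : ℕ∞) f) (w w' : E3) (v : E3) :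
    pd w (pd w' f) v = pd w' (pd w f) v := by
  have hd : DifferentiableAt ℝ (fderiv ℝ f) v :=
    ((hf.fderiv_right (m := (⊤ : ℕ∞)) (by simp)).differentiable (by simp)).differentiableAt
  have key : ∀ u u' : E3, fderiv ℝ (fun z => fderiv ℝ f z u') v u
      = fderiv ℝ (fderiv ℝ f) v u u' := by
    intro u u'
    rw [fderiv_clm_apply hd (differentiableAt_const u')]
    simp
  have hsymm : IsSymmSndFDerivAt ℝ f v :=
    hf.contDiffAt.isSymmSndFDerivAt (by rw [minSmoothness_of_isRCLikeNormedField]; exact WithTop.coe_le_coe.mpr le_top)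
  show fderiv ℝ (fun z => fderiv ℝ f z w') v w = fderiv ℝ (fun z => fderiv ℝ f z w) v w'
  rw [key w w', key w' w, hsymm w w']

variable {n : ℕ}

/-- entrywise derivative of a one-variable matrix function -/
noncomputable def D1 (f : ℝ → Matrix (Fin n) (Fin n) ℝ) (x : ℝ) : Matrix (Fin n) (Fin n) ℝ :=
  Matrix.of fun i j => deriv (fun u => f u i j) x

def Dble (f : ℝ → Matrix (Fin n) (Fin n) ℝ) (x : ℝ) : Prop :=
  ∀ i j, DifferentiableAt ℝ (fun u => f u i j) x

lemma hasDerivAt_entry {f : ℝ → Matrix (Fin n) (Fin n) ℝ} {x : ℝ} (hf : Dble f x) (i j : Fin n) :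
    HasDerivAt (fun u => f u i j) (D1 f x i j) x := (hf i j).hasDerivAt

lemma Dble.mul {f g : ℝ → Matrix (Fin n) (Fin n) ℝ} {x : ℝ} (hf : Dble f x) (hg : Dble g x) :
    Dble (fun u => f u * g u) x := by
  intro i j
  simp only [Matrix.mul_apply]
  exact DifferentiableAt.fun_sum fun k _ => (hf i k).mul (hg k j)

lemma Dble.add {f g : ℝ → Matrix (Fin n) (Fin n) ℝ} {x : ℝ} (hf : Dble f x) (hg : Dble g x) :
    Dble (fun u => f u + g u) x := by
  intro i j
  simp only [Matrix.add_apply]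
  exact (hf i j).add (hg i j)

lemma Dble.smul {f : ℝ → Matrix (Fin n) (Fin n) ℝ} {x : ℝ} (c : ℝ) (hf : Dble f x) :
    Dble (fun u => c • f u) x := by
  intro i j
  simp only [Matrix.smul_apply, smul_eq_mul]
  exact (hf i j).const_mul c

lemma Dble.const (M : Matrix (Fin n) (Fin n) ℝ) (x : ℝ) : Dble (fun _ => M) x :=
  fun _ _ => differentiableAt_const _

lemma D1_mul {f g : ℝ → Matrix (Fin n) (Fin n) ℝ} {x : ℝ} (hf : Dble f x) (hg : Dble g x) :
    D1 (fun u => f u * g u) x = D1 f x * g x + f x * D1 g x := by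
  ext i j
  have h : HasDerivAt (fun u => (f u * g u) i j)
      (∑ k, (D1 f x i k * g x k j + f x i k * D1 g x k j)) x := by
    simp only [Matrix.mul_apply]
    exact HasDerivAt.fun_sum fun k _ => (hasDerivAt_entry hf i k).mul (hasDerivAt_entry hg k j)
  have hd := h.deriv
  show deriv (fun u => (f u * g u) i j) x = (D1 f x * g x + f x * D1 g x) i j
  rw [hd]
  simp [Matrix.mul_apply, Finset.sum_add_distrib]

lemma D1_add {f g : ℝ → Matrix (Fin n) (Fin n) ℝ} {x : ℝ} (hf : Dble f x) (hg : Dble g x) :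
    D1 (fun u => f u + g u) x = D1 f x + D1 g x := by
  ext i j
  have h : HasDerivAt (fun u => (f u + g u) i j) (D1 f x i j + D1 g x i j) x := by
    simp only [Matrix.add_apply]
    exact (hasDerivAt_entry hf i j).add (hasDerivAt_entry hg i j)
  have hd := h.deriv
  show deriv (fun u => (f u + g u) i j) x = (D1 f x + D1 g x) i j
  rw [hd]
  simp [D1]

lemma D1_smul {f : ℝ → Matrix (Fin n) (Fin n) ℝ} {x : ℝ} (c : ℝ) (hf : Dble f x) :
    D1 (fun u => c • f u) x = c • D1 f x := by
  ext i j
  have h : HasDerivAt (fun u => (c • f u) i j) (c • D1 f x i j) x := by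
    simp only [Matrix.smul_apply]
    exact (hasDerivAt_entry hf i j).const_smul c
  have hd := h.deriv
  show deriv (fun u => (c • f u) i j) x = (c • D1 f x) i j
  rw [hd]
  simp [D1]

lemma D1_const (M : Matrix (Fin n) (Fin n) ℝ) (x : ℝ) : D1 (fun _ => M) x = 0 := by
  ext i j
  simp [D1]

lemma D1_sub {f g : ℝ → Matrix (Fin n) (Fin n) ℝ} {x : ℝ} (hf : Dble f x) (hg : Dble g x) :
    D1 (fun u => f u - g u) x = D1 f x - D1 g x := by
  ext i j
  have h : HasDerivAt (fun u => (f u - g u) i j) (D1 f x i j - D1 g x i j) x := by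
    simp only [Matrix.sub_apply]
    exact (hasDerivAt_entry hf i j).sub (hasDerivAt_entry hg i j)
  have hd := h.deriv
  show deriv (fun u => (f u - g u) i j) x = (D1 f x - D1 g x) i j
  rw [hd]
  simp [D1]

lemma D1_const_mul {f : ℝ → Matrix (Fin n) (Fin n) ℝ} {x : ℝ}
    (M : Matrix (Fin n) (Fin n) ℝ) (hf : Dble f x) :
    D1 (fun u => M * f u) x = M * D1 f x := by
  rw [D1_mul (Dble.const M x) hf, D1_const, Matrix.zero_mul, zero_add]

lemma D1_mul_const {f : ℝ → Matrix (Fin n) (Fin n) ℝ} {x : ℝ}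
    (M : Matrix (Fin n) (Fin n) ℝ) (hf : Dble f x) :
    D1 (fun u => f u * M) x = D1 f x * M := by
  rw [D1_mul hf (Dble.const M x), D1_const, Matrix.mul_zero, add_zero]

lemma D1_neg_mul_const {f : ℝ → Matrix (Fin n) (Fin n) ℝ} {x : ℝ}
    (M : Matrix (Fin n) (Fin n) ℝ) (hf : Dble f x) :
    D1 (fun u => -(f u * M)) x = -(D1 f x * M) := by
  calc D1 (fun u => -(f u * M)) x = D1 (fun u => (-1 : ℝ) • (f u * M)) x := by
        simp only [neg_one_smul]
    _ = (-1 : ℝ) • D1 (fun u => f u * M) x := D1_smul (-1) (hf.mul (Dble.const M x))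
    _ = -(D1 f x * M) := by rw [D1_mul_const M hf, neg_one_smul]


def MSmooth (F : ℝ → ℝ → ℝ → Matrix (Fin n) (Fin n) ℝ) : Prop :=
  ∀ i j, ContDiff ℝ (⊤ : ℕ∞) fun v : E3 => F v.1 v.2.1 v.2.2 i j

lemma curve_y (t x : ℝ) (y : ℝ) :
    HasDerivAt (fun u : ℝ => ((t, u, x) : E3)) (((0:ℝ), (1:ℝ), (0:ℝ)) : E3) y :=
  (hasDerivAt_const y t).prodMk ((hasDerivAt_id y).prodMk (hasDerivAt_const y x))

lemma curve_x (t y : ℝ) (x : ℝ) :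
    HasDerivAt (fun u : ℝ => ((t, y, u) : E3)) (((0:ℝ), (0:ℝ), (1:ℝ)) : E3) x :=
  (hasDerivAt_const x t).prodMk ((hasDerivAt_const x y).prodMk (hasDerivAt_id x))

lemma contDiff_curve_t (y x : ℝ) : ContDiff ℝ (⊤ : ℕ∞) (fun u : ℝ => ((u, y, x) : E3)) :=
  contDiff_id.prodMk contDiff_const

lemma contDiff_curve_y (t x : ℝ) : ContDiff ℝ (⊤ : ℕ∞) (fun u : ℝ => ((t, u, x) : E3)) :=
  contDiff_const.prodMk (contDiff_id.prodMk contDiff_const)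

lemma contDiff_curve_x (t y : ℝ) : ContDiff ℝ (⊤ : ℕ∞) (fun u : ℝ => ((t, y, u) : E3)) :=
  contDiff_const.prodMk (contDiff_const.prodMk contDiff_id)

lemma MSmooth.dble_t {F : ℝ → ℝ → ℝ → Matrix (Fin n) (Fin n) ℝ} (hF : MSmooth F)
    (t y x : ℝ) : Dble (fun u => F u y x) t := by
  intro i j
  have : ContDiff ℝ (⊤ : ℕ∞) (fun u : ℝ => F u y x i j) := (hF i j).comp (contDiff_curve_t y x)
  exact (this.differentiable (by simp)).differentiableAt

lemma MSmooth.dble_y {F : ℝ → ℝ → ℝ → Matrix (Fin n) (Fin n) ℝ} (hF : MSmooth F)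
    (t y x : ℝ) : Dble (fun u => F t u x) y := by
  intro i j
  have : ContDiff ℝ (⊤ : ℕ∞) (fun u : ℝ => F t u x i j) := (hF i j).comp (contDiff_curve_y t x)
  exact (this.differentiable (by simp)).differentiableAt

lemma MSmooth.dble_x {F : ℝ → ℝ → ℝ → Matrix (Fin n) (Fin n) ℝ} (hF : MSmooth F)
    (t y x : ℝ) : Dble (fun u => F t y u) x := by
  intro i j
  have : ContDiff ℝ (⊤ : ℕ∞) (fun u : ℝ => F t y u i j) := (hF i j).comp (contDiff_curve_x t y)
  exact (this.differentiable (by simp)).differentiableAt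

lemma MSmooth.mul {F G : ℝ → ℝ → ℝ → Matrix (Fin n) (Fin n) ℝ}
    (hF : MSmooth F) (hG : MSmooth G) :
    MSmooth (fun t y x => F t y x * G t y x) := by
  intro i j
  simp only [Matrix.mul_apply]
  exact ContDiff.sum fun k _ => (hF i k).mul (hG k j)

lemma MSmooth.add {F G : ℝ → ℝ → ℝ → Matrix (Fin n) (Fin n) ℝ}
    (hF : MSmooth F) (hG : MSmooth G) :
    MSmooth (fun t y x => F t y x + G t y x) := by
  intro i j
  simp only [Matrix.add_apply]
  exact (hF i j).add (hG i j)

lemma MSmooth.smul {F : ℝ → ℝ → ℝ → Matrix (Fin n) (Fin n) ℝ} (c : ℝ) (hF : MSmooth F) :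
    MSmooth (fun t y x => c • F t y x) := by
  intro i j
  simp only [Matrix.smul_apply, smul_eq_mul]
  exact (contDiff_const).mul (hF i j)

lemma MSmooth.const (M : Matrix (Fin n) (Fin n) ℝ) : MSmooth (fun _ _ _ : ℝ => M) :=
  fun _ _ => contDiff_const

-- entry of Dx as pd
lemma Dx_entry_pd {F : ℝ → ℝ → ℝ → Matrix (Fin n) (Fin n) ℝ} (hF : MSmooth F)
    (i j : Fin n) (v : E3) :
    Dx F v.1 v.2.1 v.2.2 i j
      = pd ((0:ℝ), (0:ℝ), (1:ℝ)) (fun w : E3 => F w.1 w.2.1 w.2.2 i j) v :=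
  deriv_comp_curve (hF i j) (curve_x v.1 v.2.1 v.2.2)

lemma Dy_entry_pd {F : ℝ → ℝ → ℝ → Matrix (Fin n) (Fin n) ℝ} (hF : MSmooth F)
    (i j : Fin n) (v : E3) :
    Dy F v.1 v.2.1 v.2.2 i j
      = pd ((0:ℝ), (1:ℝ), (0:ℝ)) (fun w : E3 => F w.1 w.2.1 w.2.2 i j) v :=
  deriv_comp_curve (hF i j) (curve_y v.1 v.2.2 v.2.1)

lemma MSmooth.dx {F : ℝ → ℝ → ℝ → Matrix (Fin n) (Fin n) ℝ} (hF : MSmooth F) :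
    MSmooth (Dx F) := by
  intro i j
  have he : (fun v : E3 => Dx F v.1 v.2.1 v.2.2 i j)
      = pd ((0:ℝ), (0:ℝ), (1:ℝ)) (fun w : E3 => F w.1 w.2.1 w.2.2 i j) :=
    funext fun v => Dx_entry_pd hF i j v
  rw [he]
  exact pd_contDiff (hF i j) _

lemma MSmooth.dy {F : ℝ → ℝ → ℝ → Matrix (Fin n) (Fin n) ℝ} (hF : MSmooth F) :
    MSmooth (Dy F) := by
  intro i j
  have he : (fun v : E3 => Dy F v.1 v.2.1 v.2.2 i j)
      = pd ((0:ℝ), (1:ℝ), (0:ℝ)) (fun w : E3 => F w.1 w.2.1 w.2.2 i j) :=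
    funext fun v => Dy_entry_pd hF i j v
  rw [he]
  exact pd_contDiff (hF i j) _

/-- Clairaut: mixed partials commute for smooth matrix functions. -/
lemma Dy_Dx_comm {F : ℝ → ℝ → ℝ → Matrix (Fin n) (Fin n) ℝ} (hF : MSmooth F)
    (t y x : ℝ) : Dy (Dx F) t y x = Dx (Dy F) t y x := by
  ext i j
  have h1 : Dy (Dx F) t y x i j
      = pd ((0:ℝ), (1:ℝ), (0:ℝ)) (pd ((0:ℝ), (0:ℝ), (1:ℝ))
          (fun w : E3 => F w.1 w.2.1 w.2.2 i j)) ((t, y, x) : E3) := by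
    have h := Dy_entry_pd (hF := hF.dx) i j ((t, y, x) : E3)
    rw [h, show (fun w : E3 => Dx F w.1 w.2.1 w.2.2 i j)
        = pd ((0:ℝ), (0:ℝ), (1:ℝ)) (fun w : E3 => F w.1 w.2.1 w.2.2 i j)
        from funext (Dx_entry_pd hF i j)]
  have h2 : Dx (Dy F) t y x i j
      = pd ((0:ℝ), (0:ℝ), (1:ℝ)) (pd ((0:ℝ), (1:ℝ), (0:ℝ))
          (fun w : E3 => F w.1 w.2.1 w.2.2 i j)) ((t, y, x) : E3) := by
    have h := Dx_entry_pd (hF := hF.dy) i j ((t, y, x) : E3)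
    rw [h, show (fun w : E3 => Dy F w.1 w.2.1 w.2.2 i j)
        = pd ((0:ℝ), (1:ℝ), (0:ℝ)) (fun w : E3 => F w.1 w.2.1 w.2.2 i j)
        from funext (Dy_entry_pd hF i j)]
  rw [h1, h2, pd_comm (hF i j)]

end KPaux

namespace KPaux

/-- anticommutation with `V` is preserved by `Dx`. -/
lemma anti_dx {n : ℕ} {V : Matrix (Fin n) (Fin n) ℝ} {F : ℝ → ℝ → ℝ → Matrix (Fin n) (Fin n) ℝ}
    (hF : MSmooth F) (h : ∀ t y x : ℝ, V * F t y x = -(F t y x * V)) :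
    ∀ t y x : ℝ, V * Dx F t y x = -(Dx F t y x * V) := by
  intro t y x
  have h1 : D1 (fun u => V * F t y u) x = V * Dx F t y x := D1_const_mul V (hF.dble_x t y x)
  have h2 : D1 (fun u => -(F t y u * V)) x = -(Dx F t y x * V) :=
    D1_neg_mul_const V (hF.dble_x t y x)
  have h3 : (fun u => V * F t y u) = fun u => -(F t y u * V) := funext fun u => h t y u
  rw [← h1, h3, h2]

lemma Vblock {n : ℕ} (V A B Z1 Z2 : Matrix (Fin n) (Fin n) ℝ) (hV : V * V = 1)
    (hA : V * A = -(A * V)) (hB : V * B = -(B * V)) :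
    V * (V * Z1 * B + A * (V * Z2) - (V * Z2 * A + B * (V * Z1)))
      = Z1 * B - A * Z2 - Z2 * A + B * Z1 := by
  have h1 : V * (V * Z1 * B) = Z1 * B := by
    rw [← mul_assoc, ← mul_assoc, hV, one_mul]
  have h2 : V * (A * (V * Z2)) = -(A * Z2) := by
    rw [← mul_assoc, hA, neg_mul, mul_assoc, ← mul_assoc V V Z2, hV, one_mul]
  have h3 : V * (V * Z2 * A) = Z2 * A := by
    rw [← mul_assoc, ← mul_assoc, hV, one_mul]
  have h4 : V * (B * (V * Z1)) = -(B * Z1) := by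
    rw [← mul_assoc, hB, neg_mul, mul_assoc, ← mul_assoc V V Z1, hV, one_mul]
  rw [mul_sub, mul_add, mul_add, h1, h2, h3, h4]
  noncomm_ring

lemma smul2 {n : ℕ} (M : Matrix (Fin n) (Fin n) ℝ) : (2:ℝ) • M = M + M := by
  rw [show (2:ℝ) = 1 + 1 by norm_num, add_smul, one_smul]

lemma smul3 {n : ℕ} (M : Matrix (Fin n) (Fin n) ℝ) : (3:ℝ) • M = M + M + M := by
  rw [show (3:ℝ) = 1 + 1 + 1 by norm_num, add_smul, add_smul, one_smul]

lemma smul4 {n : ℕ} (M : Matrix (Fin n) (Fin n) ℝ) : (4:ℝ) • M = M + M + M + M := by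
  rw [show (4:ℝ) = 1 + 1 + 1 + 1 by norm_num, add_smul, add_smul, add_smul, one_smul]

lemma smul6 {n : ℕ} (M : Matrix (Fin n) (Fin n) ℝ) : (6:ℝ) • M = M + M + M + M + M + M := by
  rw [show (6:ℝ) = 1 + 1 + 1 + 1 + 1 + 1 by norm_num, add_smul, add_smul, add_smul,
    add_smul, add_smul, one_smul]

end KPaux

open KPaux

/-- Derivation of the matrix KP-II equation from the block Lax-pair consequences. -/
theorem stmt_6 {n : ℕ} (hn : 1 ≤ n) (V : Matrix (Fin n) (Fin n) ℝ) (hV : V * V = 1)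
    (Yd Yo : ℝ → ℝ → ℝ → Matrix (Fin n) (Fin n) ℝ)
    (hYdsmooth : ∀ i j, ContDiff ℝ (⊤ : ℕ∞) fun v : ℝ × ℝ × ℝ => Yd v.1 v.2.1 v.2.2 i j)
    (hYosmooth : ∀ i j, ContDiff ℝ (⊤ : ℕ∞) fun v : ℝ × ℝ × ℝ => Yo v.1 v.2.1 v.2.2 i j)
    (hanti : ∀ t y x : ℝ, V * Yo t y x = -(Yo t y x * V))
    (hcomm : ∀ t y x : ℝ, V * Yd t y x = Yd t y x * V)
    (h1 : ∀ t y x : ℝ, Dx Yd t y x = -(V * Yo t y x ^ 2))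
    (h2 : ∀ t y x : ℝ,
      Dy Yd t y x = Yo t y x * Dx Yo t y x - Dx Yo t y x * Yo t y x)
    (h3 : ∀ t y x : ℝ,
      Dy Yo t y x = V * (Dx (Dx Yo) t y x + (2 : ℝ) • Yo t y x ^ 3))
    (h4 : ∀ t y x : ℝ,
      Dt Yo t y x = Dx (Dx (Dx Yo)) t y x
        + (3 : ℝ) • (Dx Yo t y x * Yo t y x ^ 2)
        + (3 : ℝ) • (Yo t y x ^ 2 * Dx Yo t y x)) :
    ∀ t y x : ℝ,
      Dx (Dx (Dx (fun t y x => Yo t y x ^ 2))) t y x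
        - (3 : ℝ) • (V * Dy (Dy Yd) t y x)
        - (4 : ℝ) • Dt (fun t y x => Yo t y x ^ 2) t y x
        + (6 : ℝ) • (Yo t y x ^ 2 * Dy Yd t y x - Dy Yd t y x * Yo t y x ^ 2)
        + (6 : ℝ) • Dx (fun t y x => (Yo t y x ^ 2) ^ 2) t y x
        = 0 := by
  have sW : MSmooth Yo := hYosmooth
  have sWx : MSmooth (Dx Yo) := sW.dx
  have sWxx : MSmooth (Dx (Dx Yo)) := sWx.dx
  simp only [pow_succ, pow_zero, one_mul] at h3 h4 ⊢
  -- first x-derivative of Yo²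
  have F1 : ∀ t y x : ℝ, Dx (fun t y x => Yo t y x * Yo t y x) t y x
      = Dx Yo t y x * Yo t y x + Yo t y x * Dx Yo t y x := by
    intro t y x
    exact D1_mul (sW.dble_x t y x) (sW.dble_x t y x)
  have hF1 : Dx (fun t y x => Yo t y x * Yo t y x)
      = fun t y x => Dx Yo t y x * Yo t y x + Yo t y x * Dx Yo t y x := by
    funext t y x; exact F1 t y x
  -- second x-derivative
  have F2 : ∀ t y x : ℝ, Dx (Dx (fun t y x => Yo t y x * Yo t y x)) t y x
      = (Dx (Dx Yo) t y x * Yo t y x + Dx Yo t y x * Dx Yo t y x)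
        + (Dx Yo t y x * Dx Yo t y x + Yo t y x * Dx (Dx Yo) t y x) := by
    intro t y x
    rw [hF1]
    show D1 (fun u => Dx Yo t y u * Yo t y u + Yo t y u * Dx Yo t y u) x = _
    rw [D1_add ((sWx.mul sW).dble_x t y x) ((sW.mul sWx).dble_x t y x),
      D1_mul (sWx.dble_x t y x) (sW.dble_x t y x),
      D1_mul (sW.dble_x t y x) (sWx.dble_x t y x)]
    rfl
  have hF2 : Dx (Dx (fun t y x => Yo t y x * Yo t y x))
      = fun t y x => (Dx (Dx Yo) t y x * Yo t y x + Dx Yo t y x * Dx Yo t y x)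
        + (Dx Yo t y x * Dx Yo t y x + Yo t y x * Dx (Dx Yo) t y x) := by
    funext t y x; exact F2 t y x
  -- third x-derivative
  have F3 : ∀ t y x : ℝ, Dx (Dx (Dx (fun t y x => Yo t y x * Yo t y x))) t y x
      = ((Dx (Dx (Dx Yo)) t y x * Yo t y x + Dx (Dx Yo) t y x * Dx Yo t y x)
          + (Dx (Dx Yo) t y x * Dx Yo t y x + Dx Yo t y x * Dx (Dx Yo) t y x))
        + ((Dx (Dx Yo) t y x * Dx Yo t y x + Dx Yo t y x * Dx (Dx Yo) t y x)
          + (Dx Yo t y x * Dx (Dx Yo) t y x + Yo t y x * Dx (Dx (Dx Yo)) t y x)) := by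
    intro t y x
    rw [hF2]
    show D1 (fun u => (Dx (Dx Yo) t y u * Yo t y u + Dx Yo t y u * Dx Yo t y u)
        + (Dx Yo t y u * Dx Yo t y u + Yo t y u * Dx (Dx Yo) t y u)) x = _
    rw [D1_add (((sWxx.mul sW).add (sWx.mul sWx)).dble_x t y x)
        (((sWx.mul sWx).add (sW.mul sWxx)).dble_x t y x),
      D1_add ((sWxx.mul sW).dble_x t y x) ((sWx.mul sWx).dble_x t y x),
      D1_add ((sWx.mul sWx).dble_x t y x) ((sW.mul sWxx).dble_x t y x),
      D1_mul (sWxx.dble_x t y x) (sW.dble_x t y x),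
      D1_mul (sWx.dble_x t y x) (sWx.dble_x t y x),
      D1_mul (sW.dble_x t y x) (sWxx.dble_x t y x)]
    rfl
  -- t-derivative of Yo²
  have F4 : ∀ t y x : ℝ, Dt (fun t y x => Yo t y x * Yo t y x) t y x
      = Dt Yo t y x * Yo t y x + Yo t y x * Dt Yo t y x := by
    intro t y x
    exact D1_mul (sW.dble_t t y x) (sW.dble_t t y x)
  -- x-derivative of Yo⁴
  have F10 : ∀ t y x : ℝ, Dx (fun t y x => Yo t y x * Yo t y x * (Yo t y x * Yo t y x)) t y x
      = (Dx Yo t y x * Yo t y x + Yo t y x * Dx Yo t y x) * (Yo t y x * Yo t y x)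
        + Yo t y x * Yo t y x * (Dx Yo t y x * Yo t y x + Yo t y x * Dx Yo t y x) := by
    intro t y x
    show D1 (fun u => Yo t y u * Yo t y u * (Yo t y u * Yo t y u)) x = _
    rw [D1_mul ((sW.mul sW).dble_x t y x) ((sW.mul sW).dble_x t y x),
      D1_mul (sW.dble_x t y x) (sW.dble_x t y x)]
    rfl
  -- Clairaut + h3 : the mixed derivative of Yo
  have hDyYo : Dy Yo = fun t y x =>
      V * (Dx (Dx Yo) t y x + (2:ℝ) • (Yo t y x * Yo t y x * Yo t y x)) := by
    funext t y x; exact h3 t y x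
  have F8 : ∀ t y x : ℝ, Dy (Dx Yo) t y x
      = V * (Dx (Dx (Dx Yo)) t y x
        + (2:ℝ) • ((Dx Yo t y x * Yo t y x + Yo t y x * Dx Yo t y x) * Yo t y x
            + Yo t y x * Yo t y x * Dx Yo t y x)) := by
    intro t y x
    rw [Dy_Dx_comm sW t y x, hDyYo]
    show D1 (fun u => V * (Dx (Dx Yo) t y u
        + (2:ℝ) • (Yo t y u * Yo t y u * Yo t y u))) x = _
    rw [D1_const_mul V ((sWxx.add (MSmooth.smul 2 ((sW.mul sW).mul sW))).dble_x t y x),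
      D1_add (sWxx.dble_x t y x) ((MSmooth.smul 2 ((sW.mul sW).mul sW)).dble_x t y x),
      D1_smul 2 (((sW.mul sW).mul sW).dble_x t y x),
      D1_mul ((sW.mul sW).dble_x t y x) (sW.dble_x t y x),
      D1_mul (sW.dble_x t y x) (sW.dble_x t y x)]
    rfl
  -- second y-derivative of Yd
  have hYdy : Dy Yd = fun t y x => Yo t y x * Dx Yo t y x - Dx Yo t y x * Yo t y x := by
    funext t y x; exact h2 t y x
  have F6 : ∀ t y x : ℝ, Dy (Dy Yd) t y x
      = (Dy Yo t y x * Dx Yo t y x + Yo t y x * Dy (Dx Yo) t y x)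
        - (Dy (Dx Yo) t y x * Yo t y x + Dx Yo t y x * Dy Yo t y x) := by
    intro t y x
    rw [hYdy]
    show D1 (fun u => Yo t u x * Dx Yo t u x - Dx Yo t u x * Yo t u x) y = _
    rw [D1_sub ((sW.mul sWx).dble_y t y x) ((sWx.mul sW).dble_y t y x),
      D1_mul (sW.dble_y t y x) (sWx.dble_y t y x),
      D1_mul (sWx.dble_y t y x) (sW.dble_y t y x)]
    rfl
  -- derived anticommutation relations
  have hantiB := anti_dx sW hanti
  have hantiC := anti_dx sWx hantiB
  have hantiD := anti_dx sWxx hantiC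
  intro t y x
  rw [F3 t y x, F6 t y x, F8 t y x, h3 t y x, F4 t y x, h4 t y x, h2 t y x, F10 t y x]
  rw [Vblock V (Yo t y x) (Dx Yo t y x) _ _ hV (hanti t y x) (hantiB t y x)]
  simp only [smul2, smul3, smul4, smul6]
  noncomm_ring
end
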